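/- Monotone decrease in an unmatched weight (Theorem 1, fourth condition): let m, n, l satisfy 1 ≤ l ≤ m, l ≤ n, 1 ≤ n, let λ_k > 0 for all k < l, ξ_k > 0 for all k < m, η_k > 0 for all k < n, and fix an index j with l ≤ j < m. If ξ' : Fin m → ℝ satisfies ξ'_k = ξ_k for all k ≠ j and ξ_j ≤ ξ'_j, then F(m, n, l, λ, ξ', η) ≤ F(m, n, l, λ, ξ, η): increasing the weight of a visual word that is not in any similar visual word pair does not increase the similarity. -/

import Mathlib

open Finset

/-- Extend a weight vector on `Fin m` to `ℕ`, zero outside. -/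
noncomputable def extW {m : ℕ} (ξ : Fin m → ℝ) (k : ℕ) : ℝ :=
  if h : k < m then ξ ⟨k, h⟩ else 0

/-- The image similarity measurement of Zhang et al. (Eq. 2). -/
noncomputable def F (m n l : ℕ) (lam : Fin l → ℝ) (ξ : Fin m → ℝ) (η : Fin n → ℝ) : ℝ :=
  (∑ k : Fin l, lam k * extW ξ k * extW η k) /
    (Real.sqrt ((∑ k : Fin m, ξ k) * (∑ k : Fin n, η k)) *
      Real.sqrt ((∑ k : Fin l, (lam k) ^ 2 * extW ξ k * extW η k) +
        (∑ k ∈ Finset.Ico l m, extW ξ k) * (∑ k ∈ Finset.Ico l n, extW η k)))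

section extW

variable {m : ℕ} {ξ ξ' : Fin m → ℝ}

theorem extW_of_lt {k : ℕ} (hk : k < m) : extW ξ k = ξ ⟨k, hk⟩ := dif_pos hk

theorem extW_of_not_lt {k : ℕ} (hk : ¬k < m) : extW ξ k = 0 := dif_neg hk

theorem extW_nonneg (hξ : ∀ k, 0 ≤ ξ k) (k : ℕ) : 0 ≤ extW ξ k := by
  by_cases hk : k < m
  · rw [extW_of_lt hk]; exact hξ _
  · rw [extW_of_not_lt hk]

theorem extW_pos (hξ : ∀ k, 0 < ξ k) {k : ℕ} (hk : k < m) : 0 < extW ξ k := by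
  rw [extW_of_lt hk]; exact hξ _

theorem extW_mono (h : ξ ≤ ξ') (k : ℕ) : extW ξ k ≤ extW ξ' k := by
  by_cases hk : k < m
  · rw [extW_of_lt hk, extW_of_lt hk]; exact h _
  · rw [extW_of_not_lt hk, extW_of_not_lt hk]

end extW

theorem sum_fin_pos {n : ℕ} (hn : 0 < n) {f : Fin n → ℝ} (hf : ∀ k, 0 < f k) :
    0 < ∑ k, f k :=
  sum_pos (fun k _ => hf k) ⟨⟨0, hn⟩, mem_univ _⟩

-- The numerator and the matched part of the denominator only see `ξ` below `l`, so they are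
-- unchanged; the other factors of the denominator can only grow.
theorem F_antitone_of_eq_on_matched {m n l : ℕ} (hl : 0 < l) (hlm : l ≤ m) (hln : l ≤ n)
    {lam : Fin l → ℝ} {ξ ξ' : Fin m → ℝ} {η : Fin n → ℝ}
    (hlam : ∀ k, 0 < lam k) (hξ : ∀ k, 0 < ξ k) (hη : ∀ k, 0 < η k)
    (hle : ξ ≤ ξ') (hmatched : ∀ k : Fin l, extW ξ' k = extW ξ k) :
    F m n l lam ξ' η ≤ F m n l lam ξ η := by
  have hS : 0 < ∑ k, ξ k := sum_fin_pos (hl.trans_le hlm) hξ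
  have hT : 0 < ∑ k, η k := sum_fin_pos (hl.trans_le hln) hη
  have hξext := extW_nonneg fun k => (hξ k).le
  have hηext := extW_nonneg fun k => (hη k).le
  have hnum : 0 ≤ ∑ k : Fin l, lam k * extW ξ k * extW η k :=
    sum_nonneg fun k _ => mul_nonneg (mul_nonneg (hlam k).le (hξext k)) (hηext k)
  have hB : 0 < ∑ k : Fin l, lam k ^ 2 * extW ξ k * extW η k :=
    sum_fin_pos hl fun k => mul_pos (mul_pos (pow_pos (hlam k) 2)
      (extW_pos hξ (k.2.trans_le hlm))) (extW_pos hη (k.2.trans_le hln))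
  have hV : 0 ≤ ∑ k ∈ Ico l n, extW η k := sum_nonneg fun k _ => hηext k
  have hU : 0 ≤ ∑ k ∈ Ico l m, extW ξ k := sum_nonneg fun k _ => hξext k
  have hden : 0 < √((∑ k, ξ k) * ∑ k, η k) *
      √((∑ k : Fin l, lam k ^ 2 * extW ξ k * extW η k) +
        (∑ k ∈ Ico l m, extW ξ k) * ∑ k ∈ Ico l n, extW η k) := by
    positivity
  unfold F
  simp only [hmatched]
  refine div_le_div_of_nonneg_left hnum hden ?_
  gcongr with k _ k _
  · exact hle k
  · exact extW_mono hle k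

theorem F_antitone_unmatched_weight_general (m n l : ℕ) (hl : 1 ≤ l) (hlm : l ≤ m) (hln : l ≤ n)
    (lam : Fin l → ℝ) (ξ ξ' : Fin m → ℝ) (η : Fin n → ℝ)
    (hlam : ∀ k, 0 < lam k) (hξ : ∀ k, 0 < ξ k) (hη : ∀ k, 0 < η k)
    (j : Fin m) (hj : l ≤ (j : ℕ))
    (hsame : ∀ k, k ≠ j → ξ' k = ξ k) (hjle : ξ j ≤ ξ' j) :
    F m n l lam ξ' η ≤ F m n l lam ξ η := by
  have hle : ξ ≤ ξ' := fun k => by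
    rcases eq_or_ne k j with rfl | hk
    · exact hjle
    · exact (hsame k hk).ge
  refine F_antitone_of_eq_on_matched hl hlm hln hlam hξ hη hle fun k => ?_
  have hkm : (k : ℕ) < m := k.2.trans_le hlm
  rw [extW_of_lt hkm, extW_of_lt hkm]
  exact hsame _ fun h => (k.2.trans_le hj).ne (congrArg Fin.val h)

theorem F_antitone_unmatched_weight (m n l : ℕ) (hl : 1 ≤ l) (hlm : l ≤ m) (hln : l ≤ n)
    (hn : 1 ≤ n)
    (lam : Fin l → ℝ) (ξ ξ' : Fin m → ℝ) (η : Fin n → ℝ)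
    (hlam : ∀ k, 0 < lam k) (hξ : ∀ k, 0 < ξ k) (hη : ∀ k, 0 < η k)
    (j : Fin m) (hj : l ≤ (j : ℕ))
    (hsame : ∀ k, k ≠ j → ξ' k = ξ k) (hjle : ξ j ≤ ξ' j) :
    F m n l lam ξ' η ≤ F m n l lam ξ η :=
  F_antitone_unmatched_weight_general m n l hl hlm hln lam ξ ξ' η hlam hξ hη j hj hsame hjle
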